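/- Let X be a reflexive Banach space, Θ proper, lower semi-continuous, p-convex (p ≥ 2), F : D(F) ⊂ X → Y weakly closed, and x₀ ∈ X, ξ₀ ∈ ∂Θ(x₀). If the feasible set S = {x ∈ D(Θ) ∩ D(F) : F(x) = y} is nonempty, then there exists a minimizer x† ∈ S of x ↦ D_{ξ₀}Θ(x, x₀) over S. -/

import Mathlib

/-!
Direct method. Applying `p`-convexity at the midpoint of `x₀` and `x` and the subgradient
inequality at that midpoint gives `D_{ξ₀}Θ(x, x₀) ≥ (c₀ / 2) ‖x - x₀‖ ^ p`, so minimizing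
sequences in `S` are bounded. In a reflexive space a bounded sequence has a weakly convergent
subsequence: its closed span `M` is separable and reflexive, so `M''` and hence `M'` are
separable, and sequential Banach–Alaoglu applies in `M''`. Weak closedness of `F` keeps the
weak limit in `S`. The sublevel sets of `D_{ξ₀}Θ(·, x₀)` are convex and closed, hence weakly
sequentially closed by Hahn–Banach, so the limit is a minimizer.
-/

open NormedSpace Filter Topology TopologicalSpace Bornology

theorem Submodule.exists_dual_eq_zero_ne_zero {E : Type*} [NormedAddCommGroup E]
    [NormedSpace ℝ E] {M : Submodule ℝ E} (hM : IsClosed (M : Set E)) {x : E} (hx : x ∉ M) :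
    ∃ f : StrongDual ℝ E, (∀ m ∈ M, f m = 0) ∧ f x ≠ 0 := by
  -- makes `E ⧸ M` a normed space, on which continuous functionals separate points
  have := hM
  obtain ⟨f, hf⟩ := SeparatingDual.exists_ne_zero (R := ℝ) (x := M.mkQ x)
    (by simpa using hx)
  exact ⟨f.comp M.mkQL, fun m hm => by simp [(Submodule.Quotient.mk_eq_zero M).2 hm], hf⟩

theorem Submodule.surjective_inclusionInDoubleDual {X : Type*} [NormedAddCommGroup X]
    [NormedSpace ℝ X] (hrefl : Function.Surjective (inclusionInDoubleDual ℝ X))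
    {M : Submodule ℝ X} (hM : IsClosed (M : Set X)) :
    Function.Surjective (inclusionInDoubleDual ℝ M) := by
  intro Λ
  set R : StrongDual ℝ X →L[ℝ] StrongDual ℝ M :=
    (ContinuousLinearMap.compL ℝ M X ℝ).flip M.subtypeL
  obtain ⟨x, hx⟩ := hrefl (Λ.comp R)
  have hxΛ : ∀ ξ : StrongDual ℝ X, ξ x = Λ (R ξ) := fun ξ => by
    simpa using DFunLike.congr_fun hx ξ
  have hxM : x ∈ M := by
    by_contra hxM
    obtain ⟨f, hf0, hfx⟩ := M.exists_dual_eq_zero_ne_zero hM hxM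
    have hRf : R f = 0 := by ext m; exact hf0 m m.2
    exact hfx (by rw [hxΛ, hRf, map_zero])
  refine ⟨⟨x, hxM⟩, ContinuousLinearMap.ext fun η => ?_⟩
  obtain ⟨ξ, hξ, -⟩ := exists_extension_norm_eq M η
  have hRξ : R ξ = η := by ext m; exact hξ m
  rw [dual_def, ← hRξ, ← hxΛ ξ]
  rfl

theorem StrongDual.exists_norm_le_one_half_norm_le_apply {E : Type*} [NormedAddCommGroup E]
    [NormedSpace ℝ E] (f : StrongDual ℝ E) : ∃ z : E, ‖z‖ ≤ 1 ∧ ‖f‖ / 2 ≤ ‖f z‖ := by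
  rcases eq_or_ne f 0 with rfl | hf
  · exact ⟨0, by simp⟩
  · obtain ⟨z, hz, hfz⟩ := f.exists_lt_apply_of_lt_opNorm (half_lt_self (norm_pos_iff.2 hf))
    exact ⟨z, hz.le, hfz.le⟩

theorem separableSpace_of_separableSpace_strongDual {E : Type*} [NormedAddCommGroup E]
    [NormedSpace ℝ E] [SeparableSpace (StrongDual ℝ E)] : SeparableSpace E := by
  obtain ⟨f, hf⟩ := exists_dense_seq (StrongDual ℝ E)
  choose g hg1 hg2 using fun n => (f n).exists_norm_le_one_half_norm_le_apply
  set N := (Submodule.span ℝ (Set.range g)).topologicalClosure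
  have hgN : ∀ n, g n ∈ N := fun n =>
    Submodule.le_topologicalClosure _ (Submodule.subset_span ⟨n, rfl⟩)
  -- a functional vanishing on `N` would be close to some `f n`, which is large at `g n`
  have hN : ∀ x, x ∈ N := by
    intro x
    by_contra hx
    obtain ⟨F, hF0, hFx⟩ := N.exists_dual_eq_zero_ne_zero
      (Submodule.isClosed_topologicalClosure _) hx
    have hF : 0 < ‖F‖ := norm_pos_iff.2 fun h => hFx (by simp [h])
    obtain ⟨n, hn⟩ := Metric.denseRange_iff.1 hf F (‖F‖ / 4) (by positivity)
    rw [dist_comm, dist_eq_norm] at hn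
    have hsmall : ‖f n (g n)‖ ≤ ‖F‖ / 4 := calc
      ‖f n (g n)‖ = ‖(f n - F) (g n)‖ := by simp [hF0 _ (hgN n)]
      _ ≤ ‖f n - F‖ * ‖g n‖ := (f n - F).le_opNorm _
      _ ≤ ‖F‖ / 4 * 1 := mul_le_mul hn.le (hg1 n) (norm_nonneg _) (by positivity)
      _ = ‖F‖ / 4 := mul_one _
    have hlarge : 3 * ‖F‖ / 4 ≤ ‖f n‖ := by
      linarith [norm_sub_norm_le F (f n), norm_sub_rev F (f n)]
    linarith [hg2 n]
  have hNsep : IsSeparable (N : Set E) := by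
    rw [Submodule.topologicalClosure_coe]
    exact (Set.countable_range g).isSeparable.span.closure
  exact isSeparable_univ_iff.1 (hNsep.mono fun x _ => hN x)

def WeakTendsto {E : Type*} [NormedAddCommGroup E] [NormedSpace ℝ E] (u : ℕ → E) (x : E) :
    Prop :=
  ∀ f : StrongDual ℝ E, Tendsto (fun n => f (u n)) atTop (𝓝 (f x))

theorem exists_weakTendsto_subseq_of_separableSpace {E : Type*} [NormedAddCommGroup E]
    [NormedSpace ℝ E] [SeparableSpace E]
    (hrefl : Function.Surjective (inclusionInDoubleDual ℝ E)) {u : ℕ → E}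
    (hu : IsBounded (Set.range u)) :
    ∃ x, ∃ φ : ℕ → ℕ, StrictMono φ ∧ WeakTendsto (u ∘ φ) x := by
  have : SeparableSpace (StrongDual ℝ (StrongDual ℝ E)) :=
    hrefl.denseRange.separableSpace (inclusionInDoubleDual ℝ E).continuous
  have : SeparableSpace (StrongDual ℝ E) := separableSpace_of_separableSpace_strongDual
  obtain ⟨C, hC⟩ := hu.exists_norm_le
  have hball : ∀ n, StrongDual.toWeakDual (inclusionInDoubleDual ℝ E (u n)) ∈
      WeakDual.toStrongDual ⁻¹' Metric.closedBall (0 : StrongDual ℝ (StrongDual ℝ E)) C :=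
    fun n => (dist_zero_right (inclusionInDoubleDual ℝ E (u n))).trans_le
      ((double_dual_bound ℝ E (u n)).trans (hC _ ⟨n, rfl⟩))
  obtain ⟨Λ, -, φ, hφ, hΛ⟩ := WeakDual.isSeqCompact_closedBall ℝ _ 0 C hball
  obtain ⟨x, hx⟩ := hrefl (WeakDual.toStrongDual Λ)
  refine ⟨x, φ, hφ, fun f => ?_⟩
  have := ((WeakDual.eval_continuous f).tendsto Λ).comp hΛ
  have hΛx : Λ f = f x := by rw [← dual_def ℝ E x f, hx]; rfl
  simpa [Function.comp_def, hΛx] using this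

theorem exists_weakTendsto_subseq {X : Type*} [NormedAddCommGroup X] [NormedSpace ℝ X]
    (hrefl : Function.Surjective (inclusionInDoubleDual ℝ X)) {u : ℕ → X}
    (hu : IsBounded (Set.range u)) :
    ∃ x, ∃ φ : ℕ → ℕ, StrictMono φ ∧ WeakTendsto (u ∘ φ) x := by
  set M := (Submodule.span ℝ (Set.range u)).topologicalClosure
  have huM : ∀ n, u n ∈ M := fun n =>
    Submodule.le_topologicalClosure _ (Submodule.subset_span ⟨n, rfl⟩)
  have : SeparableSpace M := by
    refine IsSeparable.separableSpace ?_
    rw [Submodule.topologicalClosure_coe]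
    exact (Set.countable_range u).isSeparable.span.closure
  set v : ℕ → M := fun n => ⟨u n, huM n⟩
  have hv : IsBounded (Set.range v) := by
    obtain ⟨C, hC⟩ := hu.exists_norm_le
    exact isBounded_iff_forall_norm_le.2 ⟨C, by rintro - ⟨n, rfl⟩; exact hC _ ⟨n, rfl⟩⟩
  obtain ⟨x, φ, hφ, hx⟩ := exists_weakTendsto_subseq_of_separableSpace
    (Submodule.surjective_inclusionInDoubleDual hrefl (Submodule.isClosed_topologicalClosure _)) hv
  exact ⟨x, φ, hφ, fun f => hx (f.comp M.subtypeL)⟩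

theorem Convex.mem_of_weakTendsto {E : Type*} [NormedAddCommGroup E] [NormedSpace ℝ E]
    {K : Set E} (hK : Convex ℝ K) (hKc : IsClosed K) {u : ℕ → E} {x : E}
    (hu : ∀ᶠ n in atTop, u n ∈ K) (hux : WeakTendsto u x) : x ∈ K := by
  by_contra hx
  obtain ⟨f, s, hfK, hsx⟩ := geometric_hahn_banach_closed_point hK hKc hx
  have hle : f x ≤ s := le_of_tendsto (hux f) (hu.mono fun n hn => (hfK _ hn).le)
  exact hle.not_gt hsx

theorem ConvexOn.mem_and_le_of_weakTendsto {E : Type*} [NormedAddCommGroup E]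
    [NormedSpace ℝ E] {s : Set E} {g : E → ℝ} (hg : ConvexOn ℝ s g)
    (hclosed : ∀ r, IsClosed {z ∈ s | g z ≤ r}) {u : ℕ → E} {x : E} {m : ℝ}
    (hu : ∀ n, u n ∈ s) (hux : WeakTendsto u x) (hgu : Tendsto (g ∘ u) atTop (𝓝 m)) :
    x ∈ s ∧ g x ≤ m := by
  have hsub : ∀ r, m < r → x ∈ s ∧ g x ≤ r := fun r hr =>
    (hg.convex_le r).mem_of_weakTendsto (hclosed r)
      ((hgu.eventually (gt_mem_nhds hr)).mono fun n hn => ⟨hu n, hn.le⟩) hux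
  exact ⟨(hsub (m + 1) (lt_add_one m)).1,
    le_of_forall_gt_imp_ge_of_dense fun r hr => (hsub r hr).2⟩

theorem exists_isMinOn_of_weakTendsto {X : Type*} [NormedAddCommGroup X] [NormedSpace ℝ X]
    (hrefl : Function.Surjective (inclusionInDoubleDual ℝ X)) {S : Set X} {g : X → ℝ}
    (hne : S.Nonempty) (hbdd : BddBelow (g '' S))
    (hcoer : ∀ r, IsBounded {z ∈ S | g z ≤ r})
    (hlsc : ∀ (u : ℕ → X) (x : X) (m : ℝ), (∀ n, u n ∈ S) → WeakTendsto u x →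
      Tendsto (g ∘ u) atTop (𝓝 m) → x ∈ S ∧ g x ≤ m) :
    ∃ x ∈ S, IsMinOn g S x := by
  obtain ⟨d, hd_anti, hd_lim, hdS⟩ := exists_seq_tendsto_sInf (hne.image g) hbdd
  choose w hwS hwd using hdS
  have hw : IsBounded (Set.range w) :=
    (hcoer (d 0)).subset <| Set.range_subset_iff.2 fun n =>
      ⟨hwS n, (hwd n).trans_le (hd_anti (Nat.zero_le n))⟩
  obtain ⟨x, φ, hφ, hx⟩ := exists_weakTendsto_subseq hrefl hw
  have hgw : Tendsto (g ∘ w ∘ φ) atTop (𝓝 (sInf (g '' S))) := by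
    simpa only [Function.comp_def, hwd] using hd_lim.comp hφ.tendsto_atTop
  obtain ⟨hxS, hxmin⟩ := hlsc _ x _ (fun n => hwS (φ n)) hx hgw
  exact ⟨x, hxS, isMinOn_iff.2 fun z hz => hxmin.trans (csInf_le hbdd ⟨z, hz, rfl⟩)⟩

theorem isBounded_setOf_rpow_norm_sub_le {E : Type*} [SeminormedAddCommGroup E] {p : ℝ}
    (hp : 0 < p) (x₀ : E) (r : ℝ) : IsBounded {x | ‖x - x₀‖ ^ p ≤ r} :=
  (Metric.isBounded_closedBall (x := x₀) (r := r ^ p⁻¹)).subset fun x hx => by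
    rw [Metric.mem_closedBall, dist_eq_norm]
    exact (Real.le_rpow_inv_iff_of_pos (norm_nonneg _)
      ((Real.rpow_nonneg (norm_nonneg _) p).trans hx) hp).2 hx

theorem LowerSemicontinuous.isClosed_setOf_toReal_le {α : Type*} [TopologicalSpace α]
    {f : α → EReal} (hf : LowerSemicontinuous f) (hbot : ∀ z, f z ≠ ⊥) {h : α → ℝ}
    (hh : Continuous h) : IsClosed {z | f z ≠ ⊤ ∧ (f z).toReal ≤ h z} := by
  have hset : {z | f z ≠ ⊤ ∧ (f z).toReal ≤ h z} =
      (fun z => (z, (h z : EReal))) ⁻¹' {q | f q.1 ≤ q.2} := by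
    ext z
    refine ⟨fun ⟨hz, hle⟩ => ?_, fun (hle : f z ≤ h z) => ?_⟩
    · show f z ≤ (h z : EReal)
      rw [← EReal.coe_toReal hz (hbot z)]
      exact mod_cast hle
    · have hz : f z ≠ ⊤ := ne_top_of_le_ne_top (EReal.coe_ne_top _) hle
      rw [← EReal.coe_toReal hz (hbot z)] at hle
      exact ⟨hz, mod_cast hle⟩
  rw [hset]
  exact hf.isClosed_epigraph.preimage (continuous_id.prodMk (continuous_coe_real_ereal.comp hh))

section Bregman

variable {X : Type*} [NormedAddCommGroup X] [NormedSpace ℝ X] {Θ : X → EReal}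

def IsPConvex (Θ : X → EReal) (p c₀ : ℝ) : Prop :=
  ∀ x xb : X, ∀ γ : ℝ, 0 ≤ γ → γ ≤ 1 →
    Θ (γ • xb + (1 - γ) • x) + ((c₀ * γ * (1 - γ) * ‖xb - x‖ ^ p : ℝ) : EReal)
      ≤ (γ : EReal) * Θ xb + ((1 - γ : ℝ) : EReal) * Θ x

def HasSubgradientAt (Θ : X → EReal) (ξ : StrongDual ℝ X) (x₀ : X) : Prop :=
  ∀ z, Θ x₀ + ((ξ (z - x₀) : ℝ) : EReal) ≤ Θ z

/-- The Bregman distance `D_ξ Θ (x, x₀)`, meaningful only where `Θ x` and `Θ x₀` are finite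
(`EReal.toReal` sends `⊤` to `0`). -/
noncomputable def bregman (Θ : X → EReal) (ξ : StrongDual ℝ X) (x₀ x : X) : ℝ :=
  (Θ x).toReal - (Θ x₀).toReal - ξ (x - x₀)

theorem IsPConvex.ne_top_and_toReal_add_le {p c₀ : ℝ} (hΘ : IsPConvex Θ p c₀)
    (hbot : ∀ z, Θ z ≠ ⊥) {x xb : X} (hx : Θ x ≠ ⊤) (hxb : Θ xb ≠ ⊤) {γ : ℝ} (hγ₀ : 0 ≤ γ)
    (hγ₁ : γ ≤ 1) :
    Θ (γ • xb + (1 - γ) • x) ≠ ⊤ ∧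
      (Θ (γ • xb + (1 - γ) • x)).toReal + c₀ * γ * (1 - γ) * ‖xb - x‖ ^ p
        ≤ γ * (Θ xb).toReal + (1 - γ) * (Θ x).toReal := by
  have key := hΘ x xb γ hγ₀ hγ₁
  rw [← EReal.coe_toReal hx (hbot x), ← EReal.coe_toReal hxb (hbot xb), ← EReal.coe_mul,
    ← EReal.coe_mul, ← EReal.coe_add] at key
  have hmid : Θ (γ • xb + (1 - γ) • x) ≠ ⊤ := fun htop => by
    rw [htop, EReal.top_add_coe, top_le_iff] at key
    exact EReal.coe_ne_top _ key
  rw [← EReal.coe_toReal hmid (hbot _), ← EReal.coe_add] at key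
  exact ⟨hmid, mod_cast key⟩

theorem IsPConvex.convexOn_toReal {p c₀ : ℝ} (hΘ : IsPConvex Θ p c₀) (hbot : ∀ z, Θ z ≠ ⊥)
    (hc₀ : 0 ≤ c₀) : ConvexOn ℝ {z | Θ z ≠ ⊤} fun z => (Θ z).toReal := by
  have key : ∀ ⦃x⦄, Θ x ≠ ⊤ → ∀ ⦃y⦄, Θ y ≠ ⊤ → ∀ ⦃a b : ℝ⦄, 0 ≤ a → 0 ≤ b → a + b = 1 →
      Θ (a • x + b • y) ≠ ⊤ ∧
        (Θ (a • x + b • y)).toReal ≤ a * (Θ x).toReal + b * (Θ y).toReal := by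
    intro x hx y hy a b ha hb hab
    obtain rfl : b = 1 - a := by linarith
    obtain ⟨hmid, hle⟩ := hΘ.ne_top_and_toReal_add_le hbot hy hx ha (by linarith)
    have : 0 ≤ c₀ * a * (1 - a) * ‖x - y‖ ^ p := by
      have := Real.rpow_nonneg (norm_nonneg (x - y)) p
      positivity
    exact ⟨hmid, by linarith⟩
  exact ⟨fun x hx y hy a b ha hb hab => (key hx hy ha hb hab).1,
    fun x hx y hy a b ha hb hab => (key hx hy ha hb hab).2⟩

namespace HasSubgradientAt

variable {ξ : StrongDual ℝ X} {x₀ z : X}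

theorem ne_top (hξ : HasSubgradientAt Θ ξ x₀) (hz : Θ z ≠ ⊤) : Θ x₀ ≠ ⊤ :=
  fun htop => by
    have key := hξ z
    rw [htop, EReal.top_add_coe, top_le_iff] at key
    exact hz key

theorem add_le_toReal (hξ : HasSubgradientAt Θ ξ x₀) (hbot : ∀ z, Θ z ≠ ⊥) (hz : Θ z ≠ ⊤) :
    (Θ x₀).toReal + ξ (z - x₀) ≤ (Θ z).toReal := by
  have key := hξ z
  rw [← EReal.coe_toReal (hξ.ne_top hz) (hbot x₀), ← EReal.coe_toReal hz (hbot z),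
    ← EReal.coe_add] at key
  exact mod_cast key

theorem bregman_nonneg (hξ : HasSubgradientAt Θ ξ x₀) (hbot : ∀ z, Θ z ≠ ⊥) (hz : Θ z ≠ ⊤) :
    0 ≤ bregman Θ ξ x₀ z := by
  unfold bregman
  linarith [hξ.add_le_toReal hbot hz]

end HasSubgradientAt

theorem IsPConvex.mul_rpow_le_bregman {p c₀ : ℝ} (hΘ : IsPConvex Θ p c₀)
    {ξ : StrongDual ℝ X} {x₀ z : X} (hξ : HasSubgradientAt Θ ξ x₀) (hbot : ∀ z, Θ z ≠ ⊥)
    (hz : Θ z ≠ ⊤) : c₀ / 2 * ‖z - x₀‖ ^ p ≤ bregman Θ ξ x₀ z := by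
  obtain ⟨hmid, hle⟩ := hΘ.ne_top_and_toReal_add_le hbot (hξ.ne_top hz) hz
    (γ := 1 / 2) (by norm_num) (by norm_num)
  have hsub := hξ.add_le_toReal hbot hmid
  have hlin : ξ ((1 / 2 : ℝ) • z + (1 - 1 / 2 : ℝ) • x₀ - x₀) = 1 / 2 * ξ (z - x₀) := by
    rw [show (1 / 2 : ℝ) • z + (1 - 1 / 2 : ℝ) • x₀ - x₀ = (1 / 2 : ℝ) • (z - x₀) by module,
      map_smul, smul_eq_mul]
  unfold bregman
  linarith

theorem IsPConvex.isBounded_setOf_bregman_le {p c₀ : ℝ} (hΘ : IsPConvex Θ p c₀)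
    {ξ : StrongDual ℝ X} {x₀ : X} (hξ : HasSubgradientAt Θ ξ x₀) (hbot : ∀ z, Θ z ≠ ⊥)
    (hp : 0 < p) (hc₀ : 0 < c₀) (r : ℝ) :
    IsBounded {z | Θ z ≠ ⊤ ∧ bregman Θ ξ x₀ z ≤ r} :=
  (isBounded_setOf_rpow_norm_sub_le hp x₀ (2 * r / c₀)).subset fun z ⟨hz, hzr⟩ => by
    have := hΘ.mul_rpow_le_bregman hξ hbot hz
    show ‖z - x₀‖ ^ p ≤ 2 * r / c₀
    rw [le_div_iff₀ hc₀]
    linarith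

theorem IsPConvex.convexOn_bregman {p c₀ : ℝ} (hΘ : IsPConvex Θ p c₀) (hbot : ∀ z, Θ z ≠ ⊥)
    (hc₀ : 0 ≤ c₀) (ξ : StrongDual ℝ X) (x₀ : X) :
    ConvexOn ℝ {z | Θ z ≠ ⊤} (bregman Θ ξ x₀) := by
  have hθ := hΘ.convexOn_toReal hbot hc₀
  have hbregman : bregman Θ ξ x₀ =
      (fun z => (Θ z).toReal) - fun z => ξ z + ((Θ x₀).toReal - ξ x₀) := by
    funext z
    simp only [bregman, map_sub, Pi.sub_apply]
    ring
  rw [hbregman]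
  exact hθ.sub ((ξ.toLinearMap.concaveOn hθ.1).add_const _)

theorem isClosed_setOf_bregman_le (hlsc : LowerSemicontinuous Θ) (hbot : ∀ z, Θ z ≠ ⊥)
    (ξ : StrongDual ℝ X) (x₀ : X) (r : ℝ) :
    IsClosed {z | Θ z ≠ ⊤ ∧ bregman Θ ξ x₀ z ≤ r} := by
  convert hlsc.isClosed_setOf_toReal_le hbot
    (h := fun z => r + (Θ x₀).toReal + ξ (z - x₀)) (by fun_prop) using 1
  ext z
  refine and_congr_right fun _ => ?_
  unfold bregman
  constructor <;> intro <;> linarith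

theorem coe_bregman {ξ : StrongDual ℝ X} {x₀ z : X} (hbot : ∀ z, Θ z ≠ ⊥) (hx₀ : Θ x₀ ≠ ⊤)
    (hz : Θ z ≠ ⊤) :
    ((bregman Θ ξ x₀ z : ℝ) : EReal) = Θ z - Θ x₀ - ((ξ (z - x₀) : ℝ) : EReal) := by
  rw [bregman, EReal.coe_sub, EReal.coe_sub, EReal.coe_toReal hz (hbot z),
    EReal.coe_toReal hx₀ (hbot x₀)]

end Bregman

theorem exists_bregman_minimizer_general {X Y : Type*} [NormedAddCommGroup X] [NormedSpace ℝ X]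
    [NormedAddCommGroup Y]
    (hrefl : Function.Surjective (inclusionInDoubleDual ℝ X))
    (Θ : X → EReal) (p c₀ : ℝ) (hp : 2 ≤ p) (hc₀ : 0 < c₀)
    (hbot : ∀ z, Θ z ≠ ⊥)
    (hlsc : LowerSemicontinuous Θ)
    (hpconv : ∀ x xb : X, ∀ γ : ℝ, 0 ≤ γ → γ ≤ 1 →
      Θ (γ • xb + (1 - γ) • x) + ((c₀ * γ * (1 - γ) * ‖xb - x‖ ^ p : ℝ) : EReal)
        ≤ (γ : EReal) * Θ xb + ((1 - γ : ℝ) : EReal) * Θ x)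
    (DF : Set X) (F : X → Y)
    (hweakclosed : ∀ (u : ℕ → X) (x : X) (z : Y), (∀ n, u n ∈ DF) →
      (∀ ξ : StrongDual ℝ X, Tendsto (fun n => ξ (u n)) atTop (nhds (ξ x))) →
      Tendsto (fun n => F (u n)) atTop (nhds z) → x ∈ DF ∧ F x = z)
    (x₀ : X) (ξ₀ : StrongDual ℝ X)
    (hξ₀ : ∀ z : X, Θ x₀ + ((ξ₀ (z - x₀) : ℝ) : EReal) ≤ Θ z)
    (y : Y)
    (hS : ∃ x, Θ x ≠ ⊤ ∧ x ∈ DF ∧ F x = y) :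
    ∃ xdag : X, (Θ xdag ≠ ⊤ ∧ xdag ∈ DF ∧ F xdag = y) ∧
      ∀ x : X, Θ x ≠ ⊤ → x ∈ DF → F x = y →
        Θ xdag - Θ x₀ - ((ξ₀ (xdag - x₀) : ℝ) : EReal)
          ≤ Θ x - Θ x₀ - ((ξ₀ (x - x₀) : ℝ) : EReal) := by
  have hΘ : IsPConvex Θ p c₀ := hpconv
  have hξ : HasSubgradientAt Θ ξ₀ x₀ := hξ₀
  set S : Set X := {x | Θ x ≠ ⊤ ∧ x ∈ DF ∧ F x = y}
  have hcoer : ∀ r, IsBounded {z ∈ S | bregman Θ ξ₀ x₀ z ≤ r} := fun r =>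
    (hΘ.isBounded_setOf_bregman_le hξ hbot (by linarith) hc₀ r).subset
      fun z ⟨hz, hzr⟩ => ⟨hz.1, hzr⟩
  have hweak : ∀ (u : ℕ → X) (x : X) (m : ℝ), (∀ n, u n ∈ S) → WeakTendsto u x →
      Tendsto (bregman Θ ξ₀ x₀ ∘ u) atTop (𝓝 m) → x ∈ S ∧ bregman Θ ξ₀ x₀ x ≤ m := by
    intro u x m hu hux hum
    obtain ⟨hxΘ, hxm⟩ := (hΘ.convexOn_bregman hbot hc₀.le ξ₀ x₀).mem_and_le_of_weakTendsto
      (isClosed_setOf_bregman_le hlsc hbot ξ₀ x₀) (fun n => (hu n).1) hux hum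
    obtain ⟨hxDF, hxF⟩ := hweakclosed u x y (fun n => (hu n).2.1) hux
      (tendsto_const_nhds.congr fun n => (hu n).2.2.symm)
    exact ⟨⟨hxΘ, hxDF, hxF⟩, hxm⟩
  obtain ⟨xs, hxs⟩ := hS
  obtain ⟨x, hxS, hmin⟩ := exists_isMinOn_of_weakTendsto hrefl ⟨xs, hxs⟩
    ⟨0, by rintro _ ⟨z, hz, rfl⟩; exact hξ.bregman_nonneg hbot hz.1⟩ hcoer hweak
  have hx₀ : Θ x₀ ≠ ⊤ := hξ.ne_top hxs.1
  refine ⟨x, hxS, fun z hz hzDF hzF => ?_⟩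
  rw [← coe_bregman hbot hx₀ hxS.1, ← coe_bregman hbot hx₀ hz]
  exact EReal.coe_le_coe_iff.2 (isMinOn_iff.1 hmin z ⟨hz, hzDF, hzF⟩)

/-- Let `X` be a reflexive Banach space, `Θ` proper, lower semi-continuous and `p`-convex
(`p ≥ 2`), `F : D(F) ⊂ X → Y` weakly closed, and `ξ₀ ∈ ∂Θ(x₀)`. If the feasible set
`S = {x ∈ D(Θ) ∩ D(F) : F(x) = y}` is nonempty, then there exists a minimizer `x† ∈ S`
of `x ↦ D_{ξ₀}Θ(x, x₀)` over `S`. -/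
theorem exists_bregman_minimizer {X Y : Type*} [NormedAddCommGroup X] [NormedSpace ℝ X]
    [CompleteSpace X] [NormedAddCommGroup Y] [NormedSpace ℝ Y]
    (hrefl : Function.Surjective (inclusionInDoubleDual ℝ X))
    (Θ : X → EReal) (p c₀ : ℝ) (hp : 2 ≤ p) (hc₀ : 0 < c₀)
    (hproper : ∃ z, Θ z ≠ ⊤) (hbot : ∀ z, Θ z ≠ ⊥)
    (hlsc : LowerSemicontinuous Θ)
    (hpconv : ∀ x xb : X, ∀ γ : ℝ, 0 ≤ γ → γ ≤ 1 →
      Θ (γ • xb + (1 - γ) • x) + ((c₀ * γ * (1 - γ) * ‖xb - x‖ ^ p : ℝ) : EReal)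
        ≤ (γ : EReal) * Θ xb + ((1 - γ : ℝ) : EReal) * Θ x)
    (DF : Set X) (F : X → Y)
    (hweakclosed : ∀ (u : ℕ → X) (x : X) (z : Y), (∀ n, u n ∈ DF) →
      (∀ ξ : StrongDual ℝ X, Tendsto (fun n => ξ (u n)) atTop (nhds (ξ x))) →
      Tendsto (fun n => F (u n)) atTop (nhds z) → x ∈ DF ∧ F x = z)
    (x₀ : X) (ξ₀ : StrongDual ℝ X)
    (hξ₀ : ∀ z : X, Θ x₀ + ((ξ₀ (z - x₀) : ℝ) : EReal) ≤ Θ z)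
    (y : Y)
    (hS : ∃ x, Θ x ≠ ⊤ ∧ x ∈ DF ∧ F x = y) :
    ∃ xdag : X, (Θ xdag ≠ ⊤ ∧ xdag ∈ DF ∧ F xdag = y) ∧
      ∀ x : X, Θ x ≠ ⊤ → x ∈ DF → F x = y →
        Θ xdag - Θ x₀ - ((ξ₀ (xdag - x₀) : ℝ) : EReal)
          ≤ Θ x - Θ x₀ - ((ξ₀ (x - x₀) : ℝ) : EReal) :=
  exists_bregman_minimizer_general hrefl Θ p c₀ hp hc₀ hbot hlsc hpconv DF F hweakclosed x₀ ξ₀ hξ₀ y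
    hS
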